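/- Let A and B be disjoint sets with |A| = |B| = n, and let π be a partial order on A ∪ B oriented from A to B (every strict relation a ≺_π b has a ∈ A, b ∈ B). Construct the graph G on vertices A ∪ B ∪ X ∪ Y ∪ Z (with |X| = |Y| = |Z| = n) whose edges are all pairs inside each of the three cliques A ∪ X ∪ Z, A ∪ B ∪ Z, and B ∪ Y ∪ Z, and define π' as the reflexive-transitive closure of: x_1 ≺ v for all other vertices v; x_1 ≺ y_1 ≺ z_1 ≺ x_2 ≺ y_2 ≺ z_2 ≺ ... ≺ x_n ≺ y_n ≺ z_n; and a_i ≺ b_j whenever (a_i, b_j) ∈ π. Then G has a π'-extending Hamiltonian path if and only if π has an alternating linear extension. -/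

import Mathlib

/-- The vertex set `A ∪ B ∪ X ∪ Y ∪ Z` of the construction, each part of size `n`. -/
inductive Vtx (n : ℕ) where
  | a (i : Fin n)
  | b (i : Fin n)
  | x (i : Fin n)
  | y (i : Fin n)
  | z (i : Fin n)
deriving DecidableEq

namespace Vtx

variable {n : ℕ}

/-- Membership in the clique `A ∪ X ∪ Z`. -/
def inC1 : Vtx n → Prop
  | .a _ => True | .x _ => True | .z _ => True | _ => False

/-- Membership in the clique `A ∪ B ∪ Z`. -/
def inC2 : Vtx n → Prop
  | .a _ => True | .b _ => True | .z _ => True | _ => False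

/-- Membership in the clique `B ∪ Y ∪ Z`. -/
def inC3 : Vtx n → Prop
  | .b _ => True | .y _ => True | .z _ => True | _ => False

end Vtx

/-- The graph whose edges are all pairs inside each of the cliques
`A ∪ X ∪ Z`, `A ∪ B ∪ Z` and `B ∪ Y ∪ Z`. -/
def cliqueCoverGraph (n : ℕ) : SimpleGraph (Vtx n) :=
  SimpleGraph.fromRel fun u v =>
    (u.inC1 ∧ v.inC1) ∨ (u.inC2 ∧ v.inC2) ∨ (u.inC3 ∧ v.inC3)

/-- The basic constraints of the order `π'`: `x₁ ≺ v` for all `v`;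
`x₁ ≺ y₁ ≺ z₁ ≺ x₂ ≺ y₂ ≺ z₂ ≺ ⋯ ≺ xₙ ≺ yₙ ≺ zₙ`; and `aᵢ ≺ bⱼ` whenever `R i j`. -/
def baseRel {n : ℕ} [NeZero n] (R : Fin n → Fin n → Prop) : Vtx n → Vtx n → Prop :=
  fun u v =>
    (u = Vtx.x (0 : Fin n)) ∨
    (∃ i, u = Vtx.x i ∧ v = Vtx.y i) ∨
    (∃ i, u = Vtx.y i ∧ v = Vtx.z i) ∨
    (∃ i j : Fin n, u = Vtx.z i ∧ v = Vtx.x j ∧ (j : ℕ) = (i : ℕ) + 1) ∨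
    (∃ i j : Fin n, u = Vtx.a i ∧ v = Vtx.b j ∧ R i j)

/-- The order `π'`: the reflexive-transitive closure of the basic constraints. -/
def piPrime {n : ℕ} [NeZero n] (R : Fin n → Fin n → Prop) : Vtx n → Vtx n → Prop :=
  Relation.ReflTransGen (baseRel R)

/-- `l` is a linear extension of the partial order `r`. -/
def IsLinearExtensionList {V : Type*} (r : V → V → Prop) (l : List V) : Prop :=
  l.Nodup ∧ (∀ v : V, v ∈ l) ∧
    ∀ (i j : ℕ) (hi : i < l.length) (hj : j < l.length), r l[i] l[j] → i ≤ j

/-- `l` is an `r`-extending Hamiltonian path of `G`. -/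
def IsExtendingHamPath {V : Type*} (G : SimpleGraph V) (r : V → V → Prop)
    (l : List V) : Prop :=
  IsLinearExtensionList r l ∧ l.Chain' G.Adj

/-- `l` is an alternating linear extension of the partial order on `A ∪ B`
(with `A = Sum.inl`, `B = Sum.inr`) oriented from `A` to `B` given by `R`:
a linear extension whose entries at odd (1-based) positions are exactly those of `A`. -/
def IsAltLinExt {n : ℕ} (R : Fin n → Fin n → Prop)
    (l : List (Fin n ⊕ Fin n)) : Prop :=
  l.Nodup ∧ (∀ v : Fin n ⊕ Fin n, v ∈ l) ∧
    (∀ (i j : ℕ) (hi : i < l.length) (hj : j < l.length) (a b : Fin n),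
      l[i] = Sum.inl a → l[j] = Sum.inr b → R a b → i ≤ j) ∧
    (∀ (i : ℕ) (hi : i < l.length), (∃ a : Fin n, l[i] = Sum.inl a) ↔ Even i)

/-!
Both sides amount to a pair of permutations `σ, τ` of `Fin n` such that `R (σ i) (τ j)` implies
`i ≤ j`: the alternating linear extension is `a_{σ 0} b_{τ 0} a_{σ 1} b_{τ 1} ⋯`, and the
Hamiltonian path is `x₀ a_{σ 0} b_{τ 0} y₀ z₀ x₁ ⋯`. Conversely, `π'` orders the spine
`x₀ y₀ z₀ x₁ ⋯` linearly, so in a `π'`-extending Hamiltonian path only vertices of `A ∪ B` lie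
between `xᵢ` and `yᵢ`. Since `xᵢ` is adjacent to no `b` and no `y`, and `yᵢ` to no `a`, the
vertex after `xᵢ` is some `a_{σ i}` and the one before `yᵢ` is some `b_{τ i}`. Now
`R (σ i) (τ j)` puts `a_{σ i}` before `b_{τ j}`, which is impossible for `j < i`, as then
`b_{τ j}` precedes `y_j`, which precedes `xᵢ`.
-/

section LinearExtension

variable {V : Type*} {r : V → V → Prop}

theorem isLinearExtensionList_ofFn {m : ℕ} (e : Fin m ≃ V)
    (h : ∀ u v, r u v → e.symm u ≤ e.symm v) : IsLinearExtensionList r (List.ofFn e) := by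
  refine ⟨List.nodup_ofFn.2 e.injective, fun v => List.mem_ofFn.2 (e.surjective v), ?_⟩
  intro i j hi hj hij
  simp only [List.getElem_ofFn] at hij
  simpa using h _ _ hij

theorem IsExtendingHamPath.adj_getElem {G : SimpleGraph V} {l : List V}
    (h : IsExtendingHamPath G r l) {k : ℕ} (hk : k + 1 < l.length) : G.Adj l[k] l[k + 1] :=
  List.isChain_iff_getElem.1 h.2 k hk

variable [BEq V] [LawfulBEq V] {l : List V}

theorem IsLinearExtensionList.idxOf_le (h : IsLinearExtensionList r l) {u v : V} (huv : r u v) :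
    l.idxOf u ≤ l.idxOf v :=
  h.2.2 _ _ (List.idxOf_lt_length_of_mem (h.2.1 u)) (List.idxOf_lt_length_of_mem (h.2.1 v))
    (by rwa [List.getElem_idxOf, List.getElem_idxOf])

theorem IsLinearExtensionList.idxOf_lt (h : IsLinearExtensionList r l) {u v : V} (huv : r u v)
    (hne : u ≠ v) : l.idxOf u < l.idxOf v :=
  (h.idxOf_le huv).lt_of_ne ((List.idxOf_inj (h.2.1 u)).not.2 hne)

end LinearExtension

attribute [local simp] cliqueCoverGraph Vtx.inC1 Vtx.inC2 Vtx.inC3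

section Spine

variable {n : ℕ} [NeZero n] {R : Fin n → Fin n → Prop}

theorem piPrime_x_y (i : Fin n) : piPrime R (.x i) (.y i) :=
  .single (Or.inr (Or.inl ⟨i, rfl, rfl⟩))

theorem piPrime_y_z (i : Fin n) : piPrime R (.y i) (.z i) :=
  .single (Or.inr (Or.inr (Or.inl ⟨i, rfl, rfl⟩)))

theorem piPrime_a_b {i j : Fin n} (h : R i j) : piPrime R (.a i) (.b j) :=
  .single (Or.inr (Or.inr (Or.inr (Or.inr ⟨i, j, rfl, rfl, h⟩))))

theorem piPrime_z_x {i j : Fin n} (h : i < j) : piPrime R (.z i) (.x j) := by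
  obtain ⟨j, hj⟩ := j
  induction j with
  | zero => exact absurd h (Fin.not_lt_zero _)
  | succ j ih =>
    have step : baseRel R (.z ⟨j, by omega⟩) (.x ⟨j + 1, hj⟩) :=
      Or.inr (Or.inr (Or.inr (Or.inl ⟨_, _, rfl, rfl, rfl⟩)))
    rcases Nat.lt_succ_iff_lt_or_eq.1 (Fin.lt_def.1 h) with hij | hij
    · exact (ih (by omega) hij).trans ((piPrime_x_y _).trans ((piPrime_y_z _).trans (.single step)))
    · obtain rfl : i = ⟨j, Nat.lt_of_succ_lt hj⟩ := Fin.ext hij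
      exact .single step

theorem piPrime_y_x {i j : Fin n} (h : i < j) : piPrime R (.y i) (.x j) :=
  (piPrime_y_z i).trans (piPrime_z_x h)

theorem piPrime_x_x {i j : Fin n} (h : i ≤ j) : piPrime R (.x i) (.x j) := by
  rcases h.lt_or_eq with h | rfl
  · exact (piPrime_x_y i).trans (piPrime_y_x h)
  · exact .refl

theorem piPrime_y_y {i j : Fin n} (h : i ≤ j) : piPrime R (.y i) (.y j) := by
  rcases h.lt_or_eq with h | rfl
  · exact (piPrime_y_x h).trans (piPrime_x_y j)
  · exact .refl

theorem piPrime_x_or_y_piPrime (i : Fin n) {w : Vtx n} (ha : ∀ j, w ≠ .a j) (hb : ∀ j, w ≠ .b j) :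
    piPrime R w (.x i) ∨ piPrime R (.y i) w := by
  cases w with
  | a j => exact absurd rfl (ha j)
  | b j => exact absurd rfl (hb j)
  | x j => exact (le_or_gt j i).imp piPrime_x_x piPrime_y_x
  | y j => exact (lt_or_ge j i).imp piPrime_y_x piPrime_y_y
  | z j => exact (lt_or_ge j i).imp piPrime_z_x fun h => (piPrime_y_y h).trans (piPrime_y_z j)

end Spine

section Construction

variable {n : ℕ} (σ τ : Equiv.Perm (Fin n))

def hamPath (k : Fin (5 * n)) : Vtx n :=
  let i : Fin n := ⟨(k : ℕ) / 5, by omega⟩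
  if (k : ℕ) % 5 = 0 then .x i
  else if (k : ℕ) % 5 = 1 then .a (σ i)
  else if (k : ℕ) % 5 = 2 then .b (τ i)
  else if (k : ℕ) % 5 = 3 then .y i
  else .z i

def hamRank : Vtx n → ℕ
  | .x i => 5 * i
  | .a j => 5 * σ.symm j + 1
  | .b j => 5 * τ.symm j + 2
  | .y i => 5 * i + 3
  | .z i => 5 * i + 4

def hamPathEquiv : Fin (5 * n) ≃ Vtx n where
  toFun := hamPath σ τ
  invFun v := ⟨hamRank σ τ v, by cases v <;> simp only [hamRank] <;> omega⟩
  left_inv k := by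
    ext
    unfold hamPath
    split_ifs <;> simp only [hamRank, Equiv.symm_apply_apply] <;> omega
  right_inv v := by
    cases v <;> simp [hamPath, hamRank, Nat.mul_add_div]

theorem adj_hamPath {k : ℕ} (hk : k + 1 < 5 * n) :
    (cliqueCoverGraph n).Adj (hamPath σ τ ⟨k, by omega⟩) (hamPath σ τ ⟨k + 1, hk⟩) := by
  unfold hamPath
  simp only
  split_ifs <;> first | omega | simp

theorem hamRank_le_of_baseRel [NeZero n] {R : Fin n → Fin n → Prop}
    (hR : ∀ i j, R (σ i) (τ j) → i ≤ j) {u v : Vtx n} (huv : baseRel R u v) :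
    hamRank σ τ u ≤ hamRank σ τ v := by
  rcases huv with
    rfl | ⟨i, rfl, rfl⟩ | ⟨i, rfl, rfl⟩ | ⟨i, j, rfl, rfl, hij⟩ | ⟨i, j, rfl, rfl, hij⟩
  · simp [hamRank]
  · simp only [hamRank]; omega
  · simp only [hamRank]; omega
  · simp only [hamRank]; omega
  · have := Fin.le_def.1 (hR (σ.symm i) (τ.symm j) (by simpa using hij))
    simp only [hamRank]; omega

theorem isExtendingHamPath_hamPath [NeZero n] {R : Fin n → Fin n → Prop}
    (hR : ∀ i j, R (σ i) (τ j) → i ≤ j) :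
    IsExtendingHamPath (cliqueCoverGraph n) (piPrime R) (List.ofFn (hamPathEquiv σ τ)) := by
  refine ⟨isLinearExtensionList_ofFn _ fun u v huv => ?_, List.isChain_ofFn.2 fun k hk => ?_⟩
  · change hamRank σ τ u ≤ hamRank σ τ v
    simpa [Relation.reflTransGen_eq_self] using
      huv.lift (hamRank σ τ) fun _ _ => hamRank_le_of_baseRel σ τ hR
  · exact adj_hamPath σ τ (by simpa using hk)

end Construction

section Interleave

variable {n : ℕ} (σ τ : Equiv.Perm (Fin n))

def interleave : Fin (2 * n) ≃ Fin n ⊕ Fin n where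
  toFun m :=
    let i : Fin n := ⟨(m : ℕ) / 2, by omega⟩
    if (m : ℕ) % 2 = 0 then .inl (σ i) else .inr (τ i)
  invFun := Sum.elim (fun a => ⟨2 * σ.symm a, by omega⟩) (fun b => ⟨2 * τ.symm b + 1, by omega⟩)
  left_inv m := by
    ext
    dsimp only
    split_ifs <;> simp only [Sum.elim_inl, Sum.elim_inr, Equiv.symm_apply_apply] <;> omega
  right_inv s := by
    cases s <;> simp [Nat.mul_add_div]

theorem isAltLinExt_interleave {R : Fin n → Fin n → Prop} (hR : ∀ i j, R (σ i) (τ j) → i ≤ j) :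
    IsAltLinExt R (List.ofFn (interleave σ τ)) := by
  refine ⟨List.nodup_ofFn.2 (interleave σ τ).injective,
    fun s => List.mem_ofFn.2 ((interleave σ τ).surjective s), ?_, ?_⟩
  · intro i j hi hj a b ha hb hab
    simp only [List.getElem_ofFn] at ha hb
    have hi' : i = 2 * σ.symm a := congrArg Fin.val ((interleave σ τ).eq_symm_apply.2 ha)
    have hj' : j = 2 * τ.symm b + 1 := congrArg Fin.val ((interleave σ τ).eq_symm_apply.2 hb)
    have := Fin.le_def.1 (hR (σ.symm a) (τ.symm b) (by simpa using hab))
    omega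
  · intro i hi
    simp only [List.getElem_ofFn, interleave, Equiv.coe_fn_mk, Nat.even_iff]
    split_ifs with h <;> simp [h]

end Interleave

section AltLinExt

variable {n : ℕ} {R : Fin n → Fin n → Prop} {L : List (Fin n ⊕ Fin n)}

theorem IsAltLinExt.length_eq (h : IsAltLinExt R L) : L.length = 2 * n := by
  simpa [two_mul] using Fintype.card_congr (List.Nodup.getEquivOfForallMemList L h.1 h.2.1)

theorem IsAltLinExt.exists_getElem_even (h : IsAltLinExt R L) (i : Fin n) :
    ∃ a, L[2 * (i : ℕ)]'(by rw [h.length_eq]; omega) = .inl a :=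
  (h.2.2.2 _ _).2 (even_two_mul _)

theorem IsAltLinExt.exists_getElem_odd (h : IsAltLinExt R L) (i : Fin n) :
    ∃ b, L[2 * (i : ℕ) + 1]'(by rw [h.length_eq]; omega) = .inr b := by
  rcases hs : L[2 * (i : ℕ) + 1]'(by rw [h.length_eq]; omega) with a | b
  · exact absurd ((h.2.2.2 _ _).1 ⟨a, hs⟩) (Nat.not_even_two_mul_add_one _)
  · exact ⟨b, rfl⟩

theorem exists_isAltLinExt_iff_exists_perm :
    (∃ L, IsAltLinExt R L) ↔
      ∃ σ τ : Equiv.Perm (Fin n), ∀ i j, R (σ i) (τ j) → i ≤ j := by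
  refine ⟨fun ⟨L, h⟩ => ?_, fun ⟨σ, τ, hR⟩ => ⟨_, isAltLinExt_interleave σ τ hR⟩⟩
  choose σ hσ using h.exists_getElem_even
  choose τ hτ using h.exists_getElem_odd
  have hσ_inj : σ.Injective := fun i i' hii' => by
    have := (h.1.getElem_inj_iff).1 ((hσ i).trans (hii' ▸ hσ i').symm)
    exact Fin.ext (by omega)
  have hτ_inj : τ.Injective := fun i i' hii' => by
    have := (h.1.getElem_inj_iff).1 ((hτ i).trans (hii' ▸ hτ i').symm)
    exact Fin.ext (by omega)
  refine ⟨.ofBijective σ (Finite.injective_iff_bijective.1 hσ_inj),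
    .ofBijective τ (Finite.injective_iff_bijective.1 hτ_inj), fun i j hij => ?_⟩
  have := h.2.2.1 _ _ _ _ _ _ (hσ i) (hτ j) hij
  exact Fin.le_def.2 (by omega)

end AltLinExt

section HamPath

variable {n : ℕ} [NeZero n] {R : Fin n → Fin n → Prop} {l : List (Vtx n)}

theorem IsExtendingHamPath.exists_a_or_b_of_between
    (hl : IsExtendingHamPath (cliqueCoverGraph n) (piPrime R) l) {i : Fin n} {k : ℕ}
    (hk : k < l.length) (hx : l.idxOf (.x i) < k) (hy : k < l.idxOf (.y i)) :
    (∃ j, l[k] = .a j) ∨ ∃ j, l[k] = .b j := by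
  by_contra! h
  have hpos := hl.1.1.idxOf_getElem k hk
  rcases piPrime_x_or_y_piPrime i h.1 h.2 with hw | hw <;>
  · have := hl.1.idxOf_le hw
    omega

theorem IsExtendingHamPath.exists_a_after_x
    (hl : IsExtendingHamPath (cliqueCoverGraph n) (piPrime R) l) (i : Fin n) :
    ∃ j, l.idxOf (.a j) = l.idxOf (.x i) + 1 := by
  have hxy := hl.1.idxOf_lt (piPrime_x_y i) (by simp)
  have hy := List.idxOf_lt_length_of_mem (hl.1.2.1 (.y i))
  have hadj := hl.adj_getElem (k := l.idxOf (.x i)) (by omega)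
  rw [List.getElem_idxOf] at hadj
  have hne : l.idxOf (.x i) + 1 ≠ l.idxOf (.y i) := by
    intro h
    rw [getElem_congr_idx h, List.getElem_idxOf] at hadj
    simp at hadj
  rcases hl.exists_a_or_b_of_between (i := i) (k := l.idxOf (.x i) + 1) (by omega) (by omega)
    (by omega) with ⟨j, hj⟩ | ⟨j, hj⟩
  · exact ⟨j, by rw [← hj, hl.1.1.idxOf_getElem]⟩
  · rw [hj] at hadj
    simp at hadj

theorem IsExtendingHamPath.exists_b_before_y
    (hl : IsExtendingHamPath (cliqueCoverGraph n) (piPrime R) l) (i : Fin n) :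
    ∃ j, l.idxOf (.b j) + 1 = l.idxOf (.y i) := by
  have hxy := hl.1.idxOf_lt (piPrime_x_y i) (by simp)
  have hy := List.idxOf_lt_length_of_mem (hl.1.2.1 (.y i))
  have hadj := hl.adj_getElem (k := l.idxOf (.y i) - 1) (by omega)
  rw [getElem_congr_idx (Nat.sub_add_cancel (by omega : 1 ≤ l.idxOf (.y i))),
    List.getElem_idxOf] at hadj
  have hne : l.idxOf (.y i) - 1 ≠ l.idxOf (.x i) := by
    intro h
    rw [getElem_congr_idx h, List.getElem_idxOf] at hadj
    simp at hadj
  rcases hl.exists_a_or_b_of_between (i := i) (k := l.idxOf (.y i) - 1) (by omega) (by omega)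
    (by omega) with ⟨j, hj⟩ | ⟨j, hj⟩
  · rw [hj] at hadj
    simp at hadj
  · refine ⟨j, ?_⟩
    rw [← hj, hl.1.1.idxOf_getElem]
    omega

theorem IsExtendingHamPath.exists_perm
    (hl : IsExtendingHamPath (cliqueCoverGraph n) (piPrime R) l) :
    ∃ σ τ : Equiv.Perm (Fin n), ∀ i j, R (σ i) (τ j) → i ≤ j := by
  choose σ hσ using hl.exists_a_after_x
  choose τ hτ using hl.exists_b_before_y
  have hσ_inj : σ.Injective := fun i i' hii' => by
    have := (hσ i).symm.trans (hii' ▸ hσ i')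
    simpa using (List.idxOf_inj (hl.1.2.1 _)).1 (by omega : l.idxOf (.x i) = l.idxOf (.x i'))
  have hτ_inj : τ.Injective := fun i i' hii' => by
    have := (hτ i).symm.trans (hii' ▸ hτ i')
    simpa using (List.idxOf_inj (hl.1.2.1 _)).1 (by omega : l.idxOf (.y i) = l.idxOf (.y i'))
  refine ⟨.ofBijective σ (Finite.injective_iff_bijective.1 hσ_inj),
    .ofBijective τ (Finite.injective_iff_bijective.1 hτ_inj), fun i j hij => ?_⟩
  by_contra! hji
  have hab := hl.1.idxOf_le (piPrime_a_b hij)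
  have hyx := hl.1.idxOf_lt (piPrime_y_x hji) (by simp)
  have := hσ i
  have := hτ j
  simp only [Equiv.ofBijective_apply] at hab
  omega

end HamPath

/-- The graph `G` built from the three cliques `A ∪ X ∪ Z`, `A ∪ B ∪ Z`, `B ∪ Y ∪ Z`,
together with the order `π'`, has a `π'`-extending Hamiltonian path if and only if the
partial order `π` (oriented from `A` to `B`, given by `R`) has an alternating linear
extension. -/
theorem extHamPath_iff_altLinExt (n : ℕ) [NeZero n] (R : Fin n → Fin n → Prop) :
    (∃ l : List (Vtx n), IsExtendingHamPath (cliqueCoverGraph n) (piPrime R) l) ↔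
      ∃ l : List (Fin n ⊕ Fin n), IsAltLinExt R l := by
  rw [exists_isAltLinExt_iff_exists_perm]
  exact ⟨fun ⟨_, hl⟩ => hl.exists_perm, fun ⟨σ, τ, hR⟩ => ⟨_, isExtendingHamPath_hamPath σ τ hR⟩⟩
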